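/- Let n ≥ 1, α ∈ [0,n], and let g be a locally integrable function on ℝⁿ. Let x ∈ ℝⁿ, R > 0, λ > 0 and a > 3^{n−α}. Suppose there exists ξ ∈ B_R(x) with M_α g(ξ) ≤ λ. Then {y ∈ B_R(x) : M_α g(y) > aλ} ⊆ {y ∈ B_R(x) : M_α^R g(y) > aλ}; in particular, ℒⁿ({M_α g > aλ} ∩ B_R(x)) ≤ ℒⁿ({M_α^R g > aλ} ∩ B_R(x)). -/

import Mathlib

/-!
If `M_α g(y) > aλ` is witnessed by a radius `ρ ≥ R`, then `y` and `ξ` lie within `2ρ` of each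
other, so `B_ρ(y) ⊆ B_{3ρ}(ξ)`. Comparing averages over these two balls gives
`ρ^α ⨍_{B_ρ(y)} |g| ≤ 3^{n-α} (3ρ)^α ⨍_{B_{3ρ}(ξ)} |g| ≤ 3^{n-α} M_α g(ξ) ≤ 3^{n-α} λ ≤ aλ`,
a contradiction. Hence every witnessing radius is smaller than `R`.
-/

open MeasureTheory

/-- The fractional maximal function `M_α φ(z) = sup_{ρ>0} ρ^α ⨍_{B_ρ(z)} |φ|`,
valued in `ℝ≥0∞`. -/
noncomputable def fracMaximal (n : ℕ) (α : ℝ) (φ : EuclideanSpace ℝ (Fin n) → ℝ)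
    (z : EuclideanSpace ℝ (Fin n)) : ENNReal :=
  ⨆ (ρ : ℝ) (_ : 0 < ρ), ENNReal.ofReal (ρ ^ α * ⨍ y in Metric.ball z ρ, |φ y|)

/-- The cut-off fractional maximal operator
`M_α^R φ(y) = sup_{0<ρ<R} ρ^α ⨍_{B_ρ(y)} |φ|`, valued in `ℝ≥0∞`. -/
noncomputable def fracMaximalCut (n : ℕ) (α R : ℝ) (φ : EuclideanSpace ℝ (Fin n) → ℝ)
    (y : EuclideanSpace ℝ (Fin n)) : ENNReal :=
  ⨆ (ρ : ℝ) (_ : 0 < ρ) (_ : ρ < R), ENNReal.ofReal (ρ ^ α * ⨍ z in Metric.ball y ρ, |φ z|)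

open Metric

theorem setAverage_abs_ball_le_pow_mul_setAverage_abs_ball {E : Type*} [NormedAddCommGroup E]
    [NormedSpace ℝ E] [FiniteDimensional ℝ E] [MeasurableSpace E] [BorelSpace E]
    (μ : Measure E) [μ.IsAddHaarMeasure] {f : E → ℝ} (hf : LocallyIntegrable f μ)
    {x y : E} {r k : ℝ} (hk : 0 < k) (hball : ball x r ⊆ ball y (k * r)) :
    ⨍ z in ball x r, |f z| ∂μ ≤ k ^ Module.finrank ℝ E * ⨍ z in ball y (k * r), |f z| ∂μ := by
  have hvol : μ.real (ball y (k * r)) = k ^ Module.finrank ℝ E * μ.real (ball x r) := by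
    rw [measureReal_def, measureReal_def, Measure.addHaar_ball_mul_of_pos μ y hk,
      ← Measure.addHaar_ball_center μ x, ENNReal.toReal_mul, ENNReal.toReal_ofReal (by positivity)]
  have hint : IntegrableOn (fun z => |f z|) (ball y (k * r)) μ :=
    ((hf.integrableOn_isCompact (isCompact_closedBall y (k * r))).mono_set
      ball_subset_closedBall).abs
  rw [setAverage_eq, setAverage_eq, hvol, smul_eq_mul, smul_eq_mul, mul_inv, ← mul_assoc,
    mul_inv_cancel_left₀ (by positivity)]
  gcongr
  exact .of_forall fun z => abs_nonneg (f z)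

section FractionalMaximal

variable {n : ℕ} {α : ℝ} {g : EuclideanSpace ℝ (Fin n) → ℝ}

theorem ofReal_rpow_mul_setAverage_le_fracMaximal (z : EuclideanSpace ℝ (Fin n)) {ρ : ℝ}
    (hρ : 0 < ρ) :
    ENNReal.ofReal (ρ ^ α * ⨍ y in ball z ρ, |g y|) ≤ fracMaximal n α g z :=
  le_iSup₂ (f := fun ρ (_ : 0 < ρ) => ENNReal.ofReal (ρ ^ α * ⨍ y in ball z ρ, |g y|)) ρ hρ

theorem ofReal_rpow_mul_setAverage_le_fracMaximalCut (z : EuclideanSpace ℝ (Fin n)) {R ρ : ℝ}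
    (hρ : 0 < ρ) (hρR : ρ < R) :
    ENNReal.ofReal (ρ ^ α * ⨍ y in ball z ρ, |g y|) ≤ fracMaximalCut n α R g z :=
  le_iSup_of_le ρ <| le_iSup_of_le hρ <| le_iSup_of_le hρR le_rfl

theorem ofReal_rpow_mul_setAverage_le_three_rpow_mul_fracMaximal
    (hg : LocallyIntegrable g volume) {y ξ : EuclideanSpace ℝ (Fin n)} {ρ : ℝ} (hρ : 0 < ρ)
    (hyξ : dist y ξ ≤ 2 * ρ) :
    ENNReal.ofReal (ρ ^ α * ⨍ z in ball y ρ, |g z|) ≤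
      ENNReal.ofReal (3 ^ ((n : ℝ) - α)) * fracMaximal n α g ξ := by
  have hball : ball y ρ ⊆ ball ξ (3 * ρ) := ball_subset_ball' (by linarith)
  have havg := setAverage_abs_ball_le_pow_mul_setAverage_abs_ball volume hg three_pos hball
  rw [finrank_euclideanSpace_fin] at havg
  have hrescale : ρ ^ α * (3 ^ n * ⨍ z in ball ξ (3 * ρ), |g z|) =
      3 ^ ((n : ℝ) - α) * ((3 * ρ) ^ α * ⨍ z in ball ξ (3 * ρ), |g z|) := by
    have h3α : (0 : ℝ) < 3 ^ α := by positivity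
    rw [Real.mul_rpow zero_le_three hρ.le, Real.rpow_sub three_pos, Real.rpow_natCast]
    field_simp
  calc ENNReal.ofReal (ρ ^ α * ⨍ z in ball y ρ, |g z|)
      ≤ ENNReal.ofReal (3 ^ ((n : ℝ) - α) * ((3 * ρ) ^ α * ⨍ z in ball ξ (3 * ρ), |g z|)) := by
        rw [← hrescale]
        gcongr
    _ = ENNReal.ofReal (3 ^ ((n : ℝ) - α)) *
          ENNReal.ofReal ((3 * ρ) ^ α * ⨍ z in ball ξ (3 * ρ), |g z|) :=
        ENNReal.ofReal_mul (by positivity)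
    _ ≤ ENNReal.ofReal (3 ^ ((n : ℝ) - α)) * fracMaximal n α g ξ := by
        gcongr
        exact ofReal_rpow_mul_setAverage_le_fracMaximal ξ (by positivity)

theorem lt_fracMaximalCut_of_lt_fracMaximal (hg : LocallyIntegrable g volume)
    {x y ξ : EuclideanSpace ℝ (Fin n)} {R : ℝ} {t : ENNReal} (hy : y ∈ ball x R)
    (hξ : ξ ∈ ball x R) (hξt : ENNReal.ofReal (3 ^ ((n : ℝ) - α)) * fracMaximal n α g ξ ≤ t)
    (hyt : t < fracMaximal n α g y) :
    t < fracMaximalCut n α R g y := by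
  obtain ⟨ρ, hyt⟩ := lt_iSup_iff.mp hyt
  obtain ⟨hρ, hyt⟩ := lt_iSup_iff.mp hyt
  have hρR : ρ < R := by
    by_contra! hRρ
    have hyξ : dist y ξ ≤ 2 * ρ := by
      linarith [dist_triangle_right y ξ x, mem_ball.mp hy, mem_ball.mp hξ]
    exact (hyt.trans_le
      ((ofReal_rpow_mul_setAverage_le_three_rpow_mul_fracMaximal hg hρ hyξ).trans hξt)).false
  exact hyt.trans_le (ofReal_rpow_mul_setAverage_le_fracMaximalCut y hρ hρR)

end FractionalMaximal

theorem statement9_general (n : ℕ) (α : ℝ)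
    (g : EuclideanSpace ℝ (Fin n) → ℝ) (hg : LocallyIntegrable g volume)
    (x : EuclideanSpace ℝ (Fin n)) (R lam a : ℝ)
    (ha : (3 : ℝ) ^ ((n : ℝ) - α) < a)
    (ξ : EuclideanSpace ℝ (Fin n)) (hξ : ξ ∈ Metric.ball x R)
    (hMξ : fracMaximal n α g ξ ≤ ENNReal.ofReal lam) :
    {y ∈ Metric.ball x R | ENNReal.ofReal (a * lam) < fracMaximal n α g y} ⊆
        {y ∈ Metric.ball x R | ENNReal.ofReal (a * lam) < fracMaximalCut n α R g y} ∧
      volume ({y | ENNReal.ofReal (a * lam) < fracMaximal n α g y} ∩ Metric.ball x R) ≤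
        volume ({y | ENNReal.ofReal (a * lam) < fracMaximalCut n α R g y} ∩
          Metric.ball x R) := by
  have hξ_bound : ENNReal.ofReal (3 ^ ((n : ℝ) - α)) * fracMaximal n α g ξ ≤
      ENNReal.ofReal (a * lam) := by
    have ha₀ : 0 ≤ a := ((Real.rpow_pos_of_pos three_pos _).trans ha).le
    rw [ENNReal.ofReal_mul ha₀]
    gcongr
  have hsub : {y ∈ ball x R | ENNReal.ofReal (a * lam) < fracMaximal n α g y} ⊆
      {y ∈ ball x R | ENNReal.ofReal (a * lam) < fracMaximalCut n α R g y} :=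
    fun y ⟨hy, hyt⟩ => ⟨hy, lt_fracMaximalCut_of_lt_fracMaximal hg hy hξ hξ_bound hyt⟩
  exact ⟨hsub, measure_mono fun y ⟨hyt, hy⟩ => ⟨(hsub ⟨hy, hyt⟩).2, hy⟩⟩

/-- Lemma 4.2 of the paper (cut-off lemma): if `M_α g(ξ) ≤ λ` for some
`ξ ∈ B_R(x)` and `a > 3^{n-α}`, then on `B_R(x)` the superlevel set
`{M_α g > aλ}` is contained in `{M_α^R g > aλ}`; in particular the corresponding
measure inequality holds. -/
theorem statement9 (n : ℕ) (hn : 1 ≤ n) (α : ℝ) (hα0 : 0 ≤ α) (hαn : α ≤ (n : ℝ))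
    (g : EuclideanSpace ℝ (Fin n) → ℝ) (hg : LocallyIntegrable g volume)
    (x : EuclideanSpace ℝ (Fin n)) (R lam a : ℝ) (hR : 0 < R) (hlam : 0 < lam)
    (ha : (3 : ℝ) ^ ((n : ℝ) - α) < a)
    (ξ : EuclideanSpace ℝ (Fin n)) (hξ : ξ ∈ Metric.ball x R)
    (hMξ : fracMaximal n α g ξ ≤ ENNReal.ofReal lam) :
    {y ∈ Metric.ball x R | ENNReal.ofReal (a * lam) < fracMaximal n α g y} ⊆
        {y ∈ Metric.ball x R | ENNReal.ofReal (a * lam) < fracMaximalCut n α R g y} ∧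
      volume ({y | ENNReal.ofReal (a * lam) < fracMaximal n α g y} ∩ Metric.ball x R) ≤
        volume ({y | ENNReal.ofReal (a * lam) < fracMaximalCut n α R g y} ∩
          Metric.ball x R) :=
  statement9_general n α g hg x R lam a ha ξ hξ hMξ
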